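/- arXiv:2304.00556 — 6 statements merged into one kernel-verified Lean document; each statement's English description precedes it below -/
import Mathlib

section
/- Let q(s) = 1 + 2is - s²β with β = 1 + 2iξ₀, 0 < ξ̄₀ ≤ ξ₀ ≤ ξ̄₁ < 1. There exist positive constants q₀, q₁ (independent of ξ₀ and θ) such that q₀(1+θ²) ≤ |q(ξ₀+θ)| ≤ q₁(1+θ²) for all real θ. -/
/-! With s = ξ₀ + θ, the real and imaginary parts of q(s) are 1 - s² and 2s(1 - ξ₀s), and
1 + θ² is comparable to 1 + s² since |ξ₀| ≤ 1. Both parts are O(1 + s²), giving the upper bound.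
For the lower bound, either |1 - s²| is already a fixed fraction of 1 + s², or s² is close to 1;
then |s| ≈ 1 and ξ₀ ≤ ξ̄₁ < 1 keep |1 - ξ₀ s| ≥ 1 - ξ₀|s| away from 0. -/

open Complex

noncomputable def q (ξ₀ s : ℝ) : ℂ := 1 + 2 * I * s - (1 + 2 * I * ξ₀) * s ^ 2

@[simp] lemma q_re (ξ₀ s : ℝ) : (q ξ₀ s).re = 1 - s ^ 2 := by
  simp [q, sq]

@[simp] lemma q_im (ξ₀ s : ℝ) : (q ξ₀ s).im = 2 * s * (1 - ξ₀ * s) := by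
  simp [q, sq]; ring

lemma one_add_sq_add_le {a : ℝ} (ha : |a| ≤ 1) (b : ℝ) : 1 + (a + b) ^ 2 ≤ 3 * (1 + b ^ 2) := by
  nlinarith [sq_nonneg (a - b), sq_abs a, abs_nonneg a]

lemma half_le_abs_q_im {m ξ₀ s : ℝ} (hξ₀ : 0 ≤ ξ₀) (hξ₁ : ξ₀ ≤ 1 - m)
    (hlo : 1 - m / 2 ≤ s ^ 2) (hhi : s ^ 2 ≤ 1 + m) : m / 2 ≤ |(q ξ₀ s).im| := by
  set t := |s|
  have ht : 0 ≤ t := abs_nonneg s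
  have ht2 : t ^ 2 = s ^ 2 := sq_abs s
  have htlo : 1 - m / 2 ≤ t := by nlinarith
  have hthi : t ≤ 1 + m / 2 := by nlinarith
  calc m / 2 ≤ 2 * t * (1 - ξ₀ * t) := by nlinarith
    _ ≤ 2 * t * |1 - ξ₀ * s| := by
      gcongr
      exact (by nlinarith [le_abs_self s] : 1 - ξ₀ * t ≤ 1 - ξ₀ * s).trans (le_abs_self _)
    _ = |(q ξ₀ s).im| := by rw [q_im, abs_mul, abs_mul, abs_two]

lemma le_norm_q {m ξ₀ : ℝ} (hm : 0 ≤ m) (hξ₀ : 0 ≤ ξ₀) (hξ₁ : ξ₀ ≤ 1 - m) (s : ℝ) :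
    m / 8 * (1 + s ^ 2) ≤ ‖q ξ₀ s‖ := by
  by_cases hre : m / 8 * (1 + s ^ 2) ≤ |1 - s ^ 2|
  · exact hre.trans (q_re ξ₀ s ▸ abs_re_le_norm _)
  · rw [not_le, abs_lt] at hre
    have him := half_le_abs_q_im (s := s) hξ₀ hξ₁ (by nlinarith) (by nlinarith)
    nlinarith [abs_im_le_norm (q ξ₀ s)]

lemma norm_q_le {ξ₀ : ℝ} (hξ₀ : |ξ₀| ≤ 1) (s : ℝ) : ‖q ξ₀ s‖ ≤ 4 * (1 + s ^ 2) := by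
  have hre : |(q ξ₀ s).re| ≤ 1 + s ^ 2 := by
    rw [q_re, abs_le]; constructor <;> nlinarith [sq_nonneg s]
  have him : |(q ξ₀ s).im| ≤ 1 + 3 * s ^ 2 := by
    have h : |1 - ξ₀ * s| ≤ 1 + |s| := by
      calc |1 - ξ₀ * s| ≤ |1| + |ξ₀| * |s| := by rw [← abs_mul]; exact abs_sub _ _
        _ ≤ 1 + |s| := by rw [abs_one]; nlinarith [abs_nonneg s]
    rw [q_im, abs_mul, abs_mul, abs_two]
    nlinarith [sq_abs s, abs_nonneg s, sq_nonneg (|s| - 1)]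
  linarith [norm_le_abs_re_add_abs_im (q ξ₀ s)]

theorem q_two_sided_bound_general (ξb₀ ξb₁ : ℝ) (h₀ : 0 < ξb₀) (h₁ : ξb₁ < 1) :
    ∃ q₀ q₁ : ℝ, 0 < q₀ ∧ 0 < q₁ ∧
      ∀ ξ₀ : ℝ, ξ₀ ∈ Set.Icc ξb₀ ξb₁ →
        ∀ θ : ℝ,
          q₀ * (1 + θ ^ 2) ≤ ‖(1 : ℂ) + 2 * I * (ξ₀ + θ) - (1 + 2 * I * ξ₀) * (ξ₀ + θ : ℝ) ^ 2‖ ∧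
          ‖(1 : ℂ) + 2 * I * (ξ₀ + θ) - (1 + 2 * I * ξ₀) * (ξ₀ + θ : ℝ) ^ 2‖ ≤ q₁ * (1 + θ ^ 2) := by
  refine ⟨(1 - ξb₁) / 24, 12, by linarith, by norm_num, fun ξ₀ ⟨hlo, hhi⟩ θ => ?_⟩
  have hξ₀ : |ξ₀| ≤ 1 := abs_le.2 ⟨by linarith, by linarith⟩
  have hq : (1 : ℂ) + 2 * I * (ξ₀ + θ) - (1 + 2 * I * ξ₀) * (ξ₀ + θ : ℝ) ^ 2 = q ξ₀ (ξ₀ + θ) := by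
    simp only [q, ofReal_add]
  rw [hq]
  have hθ := one_add_sq_add_le (abs_neg ξ₀ ▸ hξ₀) (ξ₀ + θ)
  have hs := one_add_sq_add_le hξ₀ θ
  rw [neg_add_cancel_left] at hθ
  have hm : 0 ≤ 1 - ξb₁ := by linarith
  constructor
  · calc (1 - ξb₁) / 24 * (1 + θ ^ 2) ≤ (1 - ξb₁) / 8 * (1 + (ξ₀ + θ) ^ 2) := by nlinarith
      _ ≤ ‖q ξ₀ (ξ₀ + θ)‖ := le_norm_q hm (by linarith) (by linarith) _
  · linarith [norm_q_le hξ₀ (ξ₀ + θ)]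

theorem q_two_sided_bound (ξb₀ ξb₁ : ℝ) (h₀ : 0 < ξb₀) (h₀₁ : ξb₀ ≤ ξb₁) (h₁ : ξb₁ < 1) :
    ∃ q₀ q₁ : ℝ, 0 < q₀ ∧ 0 < q₁ ∧
      ∀ ξ₀ : ℝ, ξ₀ ∈ Set.Icc ξb₀ ξb₁ →
        ∀ θ : ℝ,
          q₀ * (1 + θ ^ 2) ≤ ‖(1 : ℂ) + 2 * I * (ξ₀ + θ) - (1 + 2 * I * ξ₀) * (ξ₀ + θ : ℝ) ^ 2‖ ∧
          ‖(1 : ℂ) + 2 * I * (ξ₀ + θ) - (1 + 2 * I * ξ₀) * (ξ₀ + θ : ℝ) ^ 2‖ ≤ q₁ * (1 + θ ^ 2) :=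
  q_two_sided_bound_general ξb₀ ξb₁ h₀ h₁
end

section
/- For every n ≥ 0 there is a constant bₙ, independent of θ and of ξ₀ ∈ [ξ̄₀, ξ̄₁] ⊂ (0,1), such that |dⁿ/dθⁿ (q(ξ₀+θ))^{-1/2}| ≤ bₙ/(1+|θ|^{n+1}) for all real θ, where q(s) = 1 + 2is - (1+2iξ₀)s². -/
open Complex Finset ContDiff

lemma myIteratedDeriv_add {n : ℕ} {f g : ℝ → ℂ} (hf : ContDiff ℝ ∞ f) (hg : ContDiff ℝ ∞ g)
    (x : ℝ) :
    iteratedDeriv n (fun y => f y + g y) x = iteratedDeriv n f x + iteratedDeriv n g x := by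
  simp only [← iteratedDerivWithin_univ]
  exact iteratedDerivWithin_add (Set.mem_univ x) uniqueDiffOn_univ
    (hf.contDiffWithinAt.of_le (by exact_mod_cast le_top)) (hg.contDiffWithinAt.of_le (by exact_mod_cast le_top))

lemma contDiff_deriv {f : ℝ → ℂ} (hf : ContDiff ℝ ∞ f) : ContDiff ℝ ∞ (deriv f) :=
  (contDiff_infty_iff_deriv.mp hf).2

lemma myLeibniz (n : ℕ) (f g : ℝ → ℂ) (hf : ContDiff ℝ ∞ f) (hg : ContDiff ℝ ∞ g) (x : ℝ) :
    iteratedDeriv n (fun y => f y * g y) x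
      = ∑ j ∈ Finset.range (n + 1),
          (n.choose j : ℂ) * iteratedDeriv j f x * iteratedDeriv (n - j) g x := by
  induction n generalizing f g with
  | zero => simp
  | succ n IH =>
    have hdf := contDiff_deriv hf
    have hdg := contDiff_deriv hg
    have hder : deriv (fun y => f y * g y)
        = fun y => deriv f y * g y + f y * deriv g y := by
      funext y
      exact deriv_fun_mul (hf.differentiable (by simp) y) (hg.differentiable (by simp) y)
    rw [iteratedDeriv_succ', hder]
    rw [myIteratedDeriv_add (hdf.mul hg) (hf.mul hdg) x, IH _ _ hdf hg, IH _ _ hf hdg]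
    -- now combine
    have e1 : ∀ j, iteratedDeriv j (deriv f) x = iteratedDeriv (j+1) f x := by
      intro j; rw [iteratedDeriv_succ']
    have e2 : ∀ j, iteratedDeriv j (deriv g) x = iteratedDeriv (j+1) g x := by
      intro j; rw [iteratedDeriv_succ']
    simp only [e1, e2]
    -- T j := iteratedDeriv j f x * iteratedDeriv (n+1-j) g x
    set T : ℕ → ℂ := fun j => iteratedDeriv j f x * iteratedDeriv (n + 1 - j) g x with hT
    have l1 : ∑ j ∈ Finset.range (n + 1), (n.choose j : ℂ) * iteratedDeriv (j+1) f x
          * iteratedDeriv (n - j) g x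
        = ∑ j ∈ Finset.range (n + 1), (n.choose j : ℂ) * T (j+1) := by
      refine Finset.sum_congr rfl (fun j hj => ?_)
      have : n + 1 - (j + 1) = n - j := by omega
      rw [hT]; simp only [this]; ring
    have l2 : ∑ j ∈ Finset.range (n + 1), (n.choose j : ℂ) * iteratedDeriv j f x
          * iteratedDeriv (n - j + 1) g x
        = ∑ j ∈ Finset.range (n + 1), (n.choose j : ℂ) * T j := by
      refine Finset.sum_congr rfl (fun j hj => ?_)
      have hj' : j ≤ n := by simpa [Nat.lt_succ_iff] using hj
      have : n - j + 1 = n + 1 - j := by omega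
      rw [hT]; simp only [this]; ring
    rw [l1, l2]
    have rhs : ∑ j ∈ Finset.range (n + 2), ((n+1).choose j : ℂ) * iteratedDeriv j f x
          * iteratedDeriv (n + 1 - j) g x
        = ∑ j ∈ Finset.range (n + 2), ((n+1).choose j : ℂ) * T j := by
      refine Finset.sum_congr rfl (fun j hj => ?_); rw [hT]; ring
    rw [rhs]
    -- RHS = T 0 + ∑_{i<n+1} C(n+1,i+1) T (i+1)
    rw [Finset.sum_range_succ' (fun j => ((n+1).choose j : ℂ) * T j) (n+1)]
    simp only [Nat.choose_succ_succ, Nat.cast_add, Nat.choose_zero_right, Nat.cast_one, one_mul]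
    have split : ∑ i ∈ Finset.range (n + 1), ((n.choose i : ℂ) + (n.choose (i+1) : ℂ)) * T (i+1)
        = ∑ i ∈ Finset.range (n + 1), (n.choose i : ℂ) * T (i+1)
          + ∑ i ∈ Finset.range (n + 1), (n.choose (i+1) : ℂ) * T (i+1) := by
      rw [← Finset.sum_add_distrib]; exact Finset.sum_congr rfl (fun i _ => by ring)
    rw [split]
    have shift : ∑ i ∈ Finset.range (n + 1), (n.choose (i+1) : ℂ) * T (i+1) + T 0
        = ∑ j ∈ Finset.range (n + 1), (n.choose j : ℂ) * T j := by
      rw [Finset.sum_range_succ' (fun j => (n.choose j : ℂ) * T j) n,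
        Finset.sum_range_succ (fun i => (n.choose (i+1) : ℂ) * T (i+1)) n]
      simp [Nat.choose_succ_self]
    rw [← shift]; ring

noncomputable def Qc (ξ : ℝ) (θ : ℝ) : ℂ :=
  1 + 2*I*((ξ:ℂ)+(θ:ℂ)) - (1+2*I*(ξ:ℂ))*(((ξ:ℂ)+(θ:ℂ))*((ξ:ℂ)+(θ:ℂ)))

noncomputable def Qc1 (ξ : ℝ) (θ : ℝ) : ℂ :=
  2*I - 2*(1+2*I*(ξ:ℂ))*((ξ:ℂ)+(θ:ℂ))

noncomputable def Qc2 (ξ : ℝ) : ℂ := -2*(1+2*I*(ξ:ℂ))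

lemma hasDerivAt_s (ξ θ : ℝ) : HasDerivAt (fun t : ℝ => (ξ:ℂ)+(t:ℂ)) 1 θ := by
  simpa using (HasDerivAt.ofReal_comp (hasDerivAt_id θ)).const_add (ξ:ℂ)

lemma hasDerivAt_Qc (ξ θ : ℝ) : HasDerivAt (Qc ξ) (Qc1 ξ θ) θ := by
  have hs := hasDerivAt_s ξ θ
  have h2 : HasDerivAt (fun t : ℝ => 2*I*((ξ:ℂ)+(t:ℂ))) (2*I) θ := by
    simpa using hs.const_mul (2*I)
  have h3 : HasDerivAt (fun t : ℝ => (1+2*I*(ξ:ℂ))*(((ξ:ℂ)+(t:ℂ))*((ξ:ℂ)+(t:ℂ))))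
      ((1+2*I*(ξ:ℂ))*(1*((ξ:ℂ)+(θ:ℂ))+((ξ:ℂ)+(θ:ℂ))*1)) θ :=
    (hs.mul hs).const_mul (1+2*I*(ξ:ℂ))
  have := (h2.const_add 1).sub h3
  exact this.congr_deriv (by simp only [Qc1]; ring)

lemma hasDerivAt_Qc1 (ξ θ : ℝ) : HasDerivAt (Qc1 ξ) (Qc2 ξ) θ := by
  have hs := hasDerivAt_s ξ θ
  have h3 : HasDerivAt (fun t : ℝ => 2*(1+2*I*(ξ:ℂ))*((ξ:ℂ)+(t:ℂ)))
      (2*(1+2*I*(ξ:ℂ))) θ := by simpa using hs.const_mul (2*(1+2*I*(ξ:ℂ)))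
  have := (HasDerivAt.const_sub (2*I) h3)
  exact this.congr_deriv (by simp only [Qc2]; ring)

lemma deriv_Qc (ξ : ℝ) : deriv (Qc ξ) = Qc1 ξ :=
  funext fun θ => (hasDerivAt_Qc ξ θ).deriv

lemma deriv_Qc1 (ξ : ℝ) : deriv (Qc1 ξ) = fun _ => Qc2 ξ :=
  funext fun θ => (hasDerivAt_Qc1 ξ θ).deriv

lemma contDiff_Qc (ξ : ℝ) : ContDiff ℝ ∞ (Qc ξ) := by
  unfold Qc
  have hco : ContDiff ℝ ∞ (fun t : ℝ => (t:ℂ)) := Complex.ofRealCLM.contDiff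
  exact (contDiff_const.add (contDiff_const.mul (contDiff_const.add hco))).sub
    (contDiff_const.mul ((contDiff_const.add hco).mul (contDiff_const.add hco)))

lemma iter_zero_fun : ∀ (m : ℕ) (x : ℝ), iteratedDeriv m (fun _ : ℝ => (0:ℂ)) x = 0 := by
  intro m
  induction m with
  | zero => simp
  | succ m ih => intro x; rw [iteratedDeriv_succ']; simpa using ih x

lemma iter_const_fun (c : ℂ) (m : ℕ) (x : ℝ) :
    iteratedDeriv (m+1) (fun _ : ℝ => c) x = 0 := by
  rw [iteratedDeriv_succ']
  simpa using iter_zero_fun m x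

lemma iteratedDeriv_Qc_one (ξ : ℝ) : iteratedDeriv 1 (Qc ξ) = Qc1 ξ := by
  rw [iteratedDeriv_one, deriv_Qc]

lemma iteratedDeriv_Qc_two (ξ : ℝ) (θ : ℝ) : iteratedDeriv 2 (Qc ξ) θ = Qc2 ξ := by
  rw [iteratedDeriv_succ, iteratedDeriv_Qc_one, deriv_Qc1]

lemma iteratedDeriv_Qc_big (ξ : ℝ) (k : ℕ) (θ : ℝ) :
    iteratedDeriv (k+3) (Qc ξ) θ = 0 := by
  rw [show k+3 = (k+2)+1 from rfl, iteratedDeriv_succ', deriv_Qc,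
    show k+2 = (k+1)+1 from rfl, iteratedDeriv_succ', deriv_Qc1]
  exact iter_const_fun _ k θ

-- norm bounds, assuming 0 ≤ ξ ≤ 1
lemma norm_s_le (ξ θ : ℝ) (h0 : 0 ≤ ξ) (h1 : ξ ≤ 1) : ‖(ξ:ℂ)+(θ:ℂ)‖ ≤ 1 + |θ| := by
  calc ‖(ξ:ℂ)+(θ:ℂ)‖ ≤ ‖(ξ:ℂ)‖ + ‖(θ:ℂ)‖ := norm_add_le _ _
  _ ≤ 1 + |θ| := by
      simp only [Complex.norm_real, Real.norm_eq_abs]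
      have : |ξ| ≤ 1 := by rw [_root_.abs_of_nonneg h0]; exact h1
      linarith

lemma norm_beta_le (ξ : ℝ) (h0 : 0 ≤ ξ) (h1 : ξ ≤ 1) : ‖(1+2*I*(ξ:ℂ))‖ ≤ 3 := by
  calc ‖(1+2*I*(ξ:ℂ))‖ ≤ ‖(1:ℂ)‖ + ‖2*I*(ξ:ℂ)‖ := norm_add_le _ _
  _ ≤ 3 := by
      simp only [norm_mul, Complex.norm_real, Complex.norm_I, norm_one,
        Real.norm_eq_abs]
      have h2 : ‖(2:ℂ)‖ = 2 := by simp
      rw [h2, _root_.abs_of_nonneg h0]; linarith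

lemma norm_Qc_le (ξ θ : ℝ) (h0 : 0 ≤ ξ) (h1 : ξ ≤ 1) : ‖Qc ξ θ‖ ≤ 6*(1+|θ|)^2 := by
  have hs := norm_s_le ξ θ h0 h1
  have hb := norm_beta_le ξ h0 h1
  have habs : (0:ℝ) ≤ |θ| := abs_nonneg θ
  have hsn : (0:ℝ) ≤ ‖(ξ:ℂ)+(θ:ℂ)‖ := norm_nonneg _
  have h2 : ‖2*I*((ξ:ℂ)+(θ:ℂ))‖ = 2*‖(ξ:ℂ)+(θ:ℂ)‖ := by
    simp [norm_mul]
  calc ‖Qc ξ θ‖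
      ≤ ‖1 + 2*I*((ξ:ℂ)+(θ:ℂ))‖ + ‖(1+2*I*(ξ:ℂ))*(((ξ:ℂ)+(θ:ℂ))*((ξ:ℂ)+(θ:ℂ)))‖ :=
        norm_sub_le _ _
  _ ≤ (‖(1:ℂ)‖ + ‖2*I*((ξ:ℂ)+(θ:ℂ))‖)
        + ‖(1+2*I*(ξ:ℂ))‖*(‖(ξ:ℂ)+(θ:ℂ)‖*‖(ξ:ℂ)+(θ:ℂ)‖) := by
      rw [norm_mul, norm_mul]
      exact add_le_add (norm_add_le _ _) le_rfl
  _ ≤ 6*(1+|θ|)^2 := by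
      rw [h2]; simp only [norm_one]
      nlinarith [norm_nonneg ((1:ℂ)+2*I*(ξ:ℂ)), norm_nonneg ((ξ:ℂ)+(θ:ℂ))]

lemma norm_Qc1_le (ξ θ : ℝ) (h0 : 0 ≤ ξ) (h1 : ξ ≤ 1) : ‖Qc1 ξ θ‖ ≤ 8*(1+|θ|) := by
  have hs := norm_s_le ξ θ h0 h1
  have hb := norm_beta_le ξ h0 h1
  have habs : (0:ℝ) ≤ |θ| := abs_nonneg θ
  have hsn : (0:ℝ) ≤ ‖(ξ:ℂ)+(θ:ℂ)‖ := norm_nonneg _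
  calc ‖Qc1 ξ θ‖ ≤ ‖2*I‖ + ‖2*(1+2*I*(ξ:ℂ))*((ξ:ℂ)+(θ:ℂ))‖ := norm_sub_le _ _
  _ ≤ 2 + 2*3*(1+|θ|) := by
      have : ‖2*(1+2*I*(ξ:ℂ))*((ξ:ℂ)+(θ:ℂ))‖ = 2*‖1+2*I*(ξ:ℂ)‖*‖(ξ:ℂ)+(θ:ℂ)‖ := by
        rw [show (2:ℂ)*(1+2*I*(ξ:ℂ))*((ξ:ℂ)+(θ:ℂ)) = 2*((1+2*I*(ξ:ℂ))*((ξ:ℂ)+(θ:ℂ))) by ring]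
        simp [norm_mul]; ring
      rw [this]; simp only [norm_mul, Complex.norm_I, norm_one]
      have h2 : ‖(2:ℂ)‖ = 2 := by simp
      rw [h2]
      nlinarith [norm_nonneg ((1:ℂ)+2*I*(ξ:ℂ))]
  _ ≤ 8*(1+|θ|) := by nlinarith

lemma norm_Qc2_le (ξ : ℝ) (h0 : 0 ≤ ξ) (h1 : ξ ≤ 1) : ‖Qc2 ξ‖ ≤ 6 := by
  have hb := norm_beta_le ξ h0 h1
  unfold Qc2
  rw [norm_mul]
  have : ‖(-2:ℂ)‖ = 2 := by simp
  rw [this]; linarith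

lemma Qc_re (ξ θ : ℝ) : (Qc ξ θ).re = 1 - (ξ+θ)*(ξ+θ) := by
  simp [Qc]

lemma Qc_im (ξ θ : ℝ) : (Qc ξ θ).im = 2*(ξ+θ) - 2*ξ*((ξ+θ)*(ξ+θ)) := by
  simp [Qc]

lemma Qc_ne_zero {ξ : ℝ} (h0 : 0 < ξ) (h1 : ξ < 1) (θ : ℝ) : Qc ξ θ ≠ 0 := by
  intro h
  have hre := congrArg Complex.re h
  have him := congrArg Complex.im h
  rw [Qc_re] at hre
  rw [Qc_im] at him
  simp at hre him
  nlinarith [sq_nonneg (ξ+θ-1), sq_nonneg (ξ+θ+1), sq_nonneg (ξ+θ-ξ), sq_nonneg (ξ+θ)]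

lemma continuous_Qc : Continuous (fun p : ℝ × ℝ => Qc p.1 p.2) := by
  unfold Qc; fun_prop

lemma Qc_lower {ξb₀ ξb₁ : ℝ} (h₀ : 0 < ξb₀) (h₀₁ : ξb₀ ≤ ξb₁) (h₁ : ξb₁ < 1) :
    ∃ c : ℝ, 0 < c ∧ ∀ ξ ∈ Set.Icc ξb₀ ξb₁, ∀ θ : ℝ, c * (1+|θ|)^2 ≤ ‖Qc ξ θ‖ := by
  set M : ℝ := max 2 (2/ξb₀) with hM
  have hM2 : (2:ℝ) ≤ M := le_max_left _ _
  have hMi : 2/ξb₀ ≤ M := le_max_right _ _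
  set K : Set (ℝ × ℝ) := (Set.Icc ξb₀ ξb₁) ×ˢ (Set.Icc (-(M+1)) (M+1)) with hK
  have hKc : IsCompact K := isCompact_Icc.prod isCompact_Icc
  have h0mem : (0:ℝ) ∈ Set.Icc (-(M+1)) (M+1) := Set.mem_Icc.mpr ⟨by linarith, by linarith⟩
  have hKne : K.Nonempty :=
    ⟨(ξb₀, 0), Set.mem_prod.mpr ⟨Set.mem_Icc.mpr ⟨le_refl _, h₀₁⟩, h0mem⟩⟩
  obtain ⟨p₀, hp₀K, hmin⟩ := hKc.exists_isMinOn hKne (continuous_Qc.norm.continuousOn)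
  have hc₂ : 0 < ‖Qc p₀.1 p₀.2‖ := by
    rw [norm_pos_iff]
    exact Qc_ne_zero (lt_of_lt_of_le h₀ hp₀K.1.1) (lt_of_le_of_lt hp₀K.1.2 h₁) _
  set c₂ : ℝ := ‖Qc p₀.1 p₀.2‖ with hc₂def
  refine ⟨min (ξb₀/4) (c₂/(2+M)^2), lt_min (by linarith) (by positivity), ?_⟩
  rintro ξ ⟨hξ₁, hξ₂⟩ θ
  have hξ0 : 0 < ξ := lt_of_lt_of_le h₀ hξ₁
  have hξ1 : ξ < 1 := lt_of_le_of_lt hξ₂ h₁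
  by_cases hbig : M ≤ |ξ + θ|
  · have him : |2*(ξ+θ) - 2*ξ*((ξ+θ)*(ξ+θ))| ≤ ‖Qc ξ θ‖ := by
      rw [← Qc_im ξ θ]
      exact Complex.abs_im_le_norm _
    have h1' : |2*ξ*((ξ+θ)*(ξ+θ)) - 2*(ξ+θ)| = |2*(ξ+θ) - 2*ξ*((ξ+θ)*(ξ+θ))| :=
      abs_sub_comm _ _
    have h2' : |2*ξ*((ξ+θ)*(ξ+θ))| - |2*(ξ+θ)| ≤ |2*ξ*((ξ+θ)*(ξ+θ)) - 2*(ξ+θ)| :=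
      abs_sub_abs_le_abs_sub _ _
    have h3' : |2*ξ*((ξ+θ)*(ξ+θ))| = 2*ξ*((ξ+θ)*(ξ+θ)) := by
      rw [_root_.abs_of_nonneg]; nlinarith [mul_self_nonneg (ξ+θ)]
    have h4' : |2*(ξ+θ)| = 2*|ξ+θ| := by rw [abs_mul]; simp
    have hsM : 2/ξb₀ ≤ |ξ+θ| := le_trans hMi hbig
    have hA2 : 2 ≤ |ξ+θ| := le_trans hM2 hbig
    have hAb : 2 ≤ ξb₀ * |ξ+θ| := by
      rw [div_le_iff₀ h₀] at hsM; linarith [mul_comm ξb₀ |ξ+θ|]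
    have hss : |ξ+θ| * |ξ+θ| = (ξ+θ)*(ξ+θ) := abs_mul_abs_self _
    have hθs : |θ| ≤ |ξ+θ| + 1 := by
      have h5 : |θ| ≤ |ξ+θ| + |ξ| := by simpa using abs_sub (ξ+θ) ξ
      rw [_root_.abs_of_nonneg (le_of_lt hξ0)] at h5
      linarith
    have hlow : 2*ξ*((ξ+θ)*(ξ+θ)) - 2*|ξ+θ| ≤ ‖Qc ξ θ‖ := by
      rw [← h4', ← h3']; rw [h1'] at h2'; linarith
    have key : ξb₀ * ((ξ+θ)*(ξ+θ)) ≤ ‖Qc ξ θ‖ := by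
      nlinarith [abs_nonneg (ξ+θ), mul_self_nonneg (ξ+θ)]
    have hup : (1+|θ|)^2 ≤ 4*((ξ+θ)*(ξ+θ)) := by
      nlinarith [abs_nonneg θ, abs_nonneg (ξ+θ)]
    calc min (ξb₀/4) (c₂/(2+M)^2) * (1+|θ|)^2 ≤ (ξb₀/4) * (1+|θ|)^2 := by
          apply mul_le_mul_of_nonneg_right (min_le_left _ _); positivity
    _ ≤ (ξb₀/4) * (4*((ξ+θ)*(ξ+θ))) := by
          apply mul_le_mul_of_nonneg_left hup; linarith
    _ = ξb₀ * ((ξ+θ)*(ξ+θ)) := by ring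
    _ ≤ ‖Qc ξ θ‖ := key
  · push_neg at hbig
    have hθ : |θ| ≤ M + 1 := by
      have h5 : |θ| ≤ |ξ+θ| + |ξ| := by simpa using abs_sub (ξ+θ) ξ
      rw [_root_.abs_of_nonneg (le_of_lt hξ0)] at h5
      linarith [le_of_lt hbig]
    have hmem : (ξ, θ) ∈ K := by
      rw [hK]
      exact Set.mem_prod.mpr ⟨Set.mem_Icc.mpr ⟨hξ₁, hξ₂⟩, Set.mem_Icc.mpr (abs_le.mp hθ)⟩
    have hge : c₂ ≤ ‖Qc ξ θ‖ := isMinOn_iff.mp hmin (ξ,θ) hmem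
    have hup : (1+|θ|)^2 ≤ (2+M)^2 := by nlinarith [abs_nonneg θ]
    calc min (ξb₀/4) (c₂/(2+M)^2) * (1+|θ|)^2 ≤ (c₂/(2+M)^2) * (2+M)^2 := by
          apply mul_le_mul (min_le_right _ _) hup (by positivity) (by positivity)
    _ = c₂ := by field_simp
    _ ≤ ‖Qc ξ θ‖ := hge

noncomputable def Hc (ξ : ℝ) : ℝ → ℂ := fun θ => (Qc ξ θ)⁻¹

lemma contDiff_Hc (ξ : ℝ) (hne : ∀ θ, Qc ξ θ ≠ 0) : ContDiff ℝ ∞ (Hc ξ) :=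
  (contDiff_Qc ξ).inv hne

lemma hc_rec (ξ : ℝ) (hne : ∀ θ, Qc ξ θ ≠ 0) (m : ℕ) (θ : ℝ) :
    iteratedDeriv (m+2) (Hc ξ) θ
      = -(Qc ξ θ)⁻¹ * ( (((m+2).choose (m+1) : ℕ) : ℂ)
            * iteratedDeriv (m+1) (Hc ξ) θ * Qc1 ξ θ
          + (((m+2).choose m : ℕ) : ℂ) * iteratedDeriv m (Hc ξ) θ * Qc2 ξ ) := by
  have hone : (fun y => Hc ξ y * Qc ξ y) = fun _ : ℝ => (1:ℂ) :=
    funext fun y => inv_mul_cancel₀ (hne y)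
  have hzero : iteratedDeriv (m+2) (fun y => Hc ξ y * Qc ξ y) θ = 0 := by
    rw [hone]; exact iter_const_fun 1 (m+1) θ
  have L := myLeibniz (m+2) (Hc ξ) (Qc ξ) (contDiff_Hc ξ hne) (contDiff_Qc ξ) θ
  rw [hzero] at L
  rw [Finset.sum_range_succ, Finset.sum_range_succ, Finset.sum_range_succ] at L
  have e2 : m + 2 - (m + 2) = 0 := by omega
  have e1 : m + 2 - (m + 1) = 1 := by omega
  have e0 : m + 2 - m = 2 := by omega
  rw [e2, e1, e0] at L
  have hrest : ∑ j ∈ Finset.range m, ((m+2).choose j : ℂ) * iteratedDeriv j (Hc ξ) θ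
      * iteratedDeriv (m+2-j) (Qc ξ) θ = 0 := by
    apply Finset.sum_eq_zero
    intro j hj
    have hj' : j < m := Finset.mem_range.mp hj
    have : m + 2 - j = (m - j - 1) + 3 := by omega
    rw [this, iteratedDeriv_Qc_big]
    ring
  rw [hrest] at L
  rw [iteratedDeriv_zero] at L
  rw [iteratedDeriv_Qc_one, iteratedDeriv_Qc_two] at L
  have hq := hne θ
  have hself : ((m+2).choose (m+2) : ℂ) = 1 := by norm_num
  rw [hself] at L
  push_cast [Nat.choose_succ_self_right] at L ⊢
  field_simp
  linear_combination (-1 : ℂ) * L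

lemma Hc_bound {ξb₀ ξb₁ : ℝ} (h₀ : 0 < ξb₀) (h₀₁ : ξb₀ ≤ ξb₁) (h₁ : ξb₁ < 1) :
    ∀ n : ℕ, ∃ c : ℝ, 0 < c ∧ ∀ ξ ∈ Set.Icc ξb₀ ξb₁, ∀ θ : ℝ,
      ‖iteratedDeriv n (Hc ξ) θ‖ ≤ c / (1+|θ|)^(n+2) := by
  obtain ⟨cq, hcq, hql⟩ := Qc_lower h₀ h₀₁ h₁
  have hcq' : cq ≠ 0 := ne_of_gt hcq
  have hne : ∀ ξ ∈ Set.Icc ξb₀ ξb₁, ∀ θ : ℝ, Qc ξ θ ≠ 0 := by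
    intro ξ hξ θ h
    have h5 := hql ξ hξ θ
    have h6 : (0:ℝ) < cq*(1+|θ|)^2 := by positivity
    rw [h, norm_zero] at h5; linarith
  have hQinv : ∀ ξ ∈ Set.Icc ξb₀ ξb₁, ∀ θ : ℝ, ‖Qc ξ θ‖⁻¹ ≤ (cq*(1+|θ|)^2)⁻¹ := by
    intro ξ hξ θ
    have h6 : (0:ℝ) < cq*(1+|θ|)^2 := by positivity
    exact inv_anti₀ h6 (hql ξ hξ θ)
  intro n
  induction n using Nat.strong_induction_on with
  | _ n IH =>
    match n, IH with
    | 0, _ =>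
      refine ⟨1/cq, by positivity, ?_⟩
      intro ξ hξ θ
      have h1t : (0:ℝ) < 1+|θ| := by positivity
      have h1t' : (1:ℝ)+|θ| ≠ 0 := ne_of_gt h1t
      calc ‖iteratedDeriv 0 (Hc ξ) θ‖ = ‖Qc ξ θ‖⁻¹ := by
            rw [iteratedDeriv_zero]; simp [Hc]
      _ ≤ (cq*(1+|θ|)^2)⁻¹ := hQinv ξ hξ θ
      _ = (1/cq) / (1+|θ|)^(0+2) := by field_simp
    | 1, _ =>
      refine ⟨8/cq^2, by positivity, ?_⟩
      intro ξ hξ θ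
      have hξ0 : 0 ≤ ξ := le_trans (le_of_lt h₀) hξ.1
      have hξ1 : ξ ≤ 1 := le_trans hξ.2 (le_of_lt h₁)
      have h1t : (0:ℝ) < 1+|θ| := by positivity
      have h1t' : (1:ℝ)+|θ| ≠ 0 := ne_of_gt h1t
      have hdiffH : Differentiable ℝ (Hc ξ) :=
        (contDiff_Hc ξ (hne ξ hξ)).differentiable (by simp)
      have hdiffQ : Differentiable ℝ (Qc ξ) :=
        (contDiff_Qc ξ).differentiable (by simp)
      have h0 : deriv (fun y => Hc ξ y * Qc ξ y) θ = 0 := by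
        have hone : (fun y => Hc ξ y * Qc ξ y) = fun _ : ℝ => (1:ℂ) :=
          funext fun y => inv_mul_cancel₀ (hne ξ hξ y)
        rw [hone]; exact deriv_const θ 1
      have hpr : deriv (Hc ξ) θ * Qc ξ θ + Hc ξ θ * Qc1 ξ θ = 0 := by
        have h2 := deriv_fun_mul (hdiffH θ) (hdiffQ θ)
        rw [h0, deriv_Qc] at h2
        linear_combination -h2
      have hdd : deriv (Hc ξ) θ = -(Qc ξ θ)⁻¹ * (Hc ξ θ * Qc1 ξ θ) := by
        have hq := hne ξ hξ θ
        field_simp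
        linear_combination hpr
      have hH0 : ‖Hc ξ θ‖ ≤ (cq*(1+|θ|)^2)⁻¹ := by
        have : ‖Hc ξ θ‖ = ‖Qc ξ θ‖⁻¹ := by simp [Hc]
        rw [this]; exact hQinv ξ hξ θ
      have hQl := hql ξ hξ θ
      have hQ1 := norm_Qc1_le ξ θ hξ0 hξ1
      calc ‖iteratedDeriv 1 (Hc ξ) θ‖ = ‖Qc ξ θ‖⁻¹ * (‖Hc ξ θ‖ * ‖Qc1 ξ θ‖) := by
            rw [iteratedDeriv_one, hdd, norm_mul, norm_neg, norm_inv, norm_mul]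
      _ ≤ (cq*(1+|θ|)^2)⁻¹ * ((cq*(1+|θ|)^2)⁻¹ * (8*(1+|θ|))) := by
            apply mul_le_mul (hQinv ξ hξ θ) _ (by positivity) (by positivity)
            exact mul_le_mul hH0 hQ1 (norm_nonneg _) (by positivity)
      _ = (8/cq^2) / (1+|θ|)^(1+2) := by
            field_simp
    | (m+2), IH =>
      obtain ⟨c1, hc1, hb1⟩ := IH (m+1) (by omega)
      obtain ⟨c0, hc0, hb0⟩ := IH m (by omega)
      refine ⟨(8*((m:ℝ)+2)*c1 + 6*(((m+2).choose m : ℕ):ℝ)*c0)/cq, by positivity, ?_⟩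
      intro ξ hξ θ
      have hξ0 : 0 ≤ ξ := le_trans (le_of_lt h₀) hξ.1
      have hξ1 : ξ ≤ 1 := le_trans hξ.2 (le_of_lt h₁)
      have h1t : (0:ℝ) < 1+|θ| := by positivity
      have h1t' : (1:ℝ)+|θ| ≠ 0 := ne_of_gt h1t
      have hP : (0:ℝ) < (1+|θ|)^(m+2) := by positivity
      have hP' : ((1:ℝ)+|θ|)^(m+2) ≠ 0 := ne_of_gt hP
      have hQ1 := norm_Qc1_le ξ θ hξ0 hξ1
      have hQ2 := norm_Qc2_le ξ hξ0 hξ1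
      have hB := hb0 ξ hξ θ
      have hA' : ‖iteratedDeriv (m+1) (Hc ξ) θ‖ ≤ c1 / ((1+|θ|)^(m+2)*(1+|θ|)) := by
        rw [← pow_succ]
        exact hb1 ξ hξ θ
      have hch : (((m+2).choose (m+1) : ℕ) : ℝ) = (m:ℝ)+2 := by
        rw [Nat.choose_succ_self_right]; push_cast; ring
      have hT1 : (((m+2).choose (m+1) : ℕ) : ℝ) * ‖iteratedDeriv (m+1) (Hc ξ) θ‖ * ‖Qc1 ξ θ‖
          ≤ ((m:ℝ)+2) * (c1 / ((1+|θ|)^(m+2)*(1+|θ|))) * (8*(1+|θ|)) := by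
        rw [hch]
        apply mul_le_mul _ hQ1 (norm_nonneg _) (by positivity)
        exact mul_le_mul le_rfl hA' (norm_nonneg _) (by positivity)
      have hT2 : (((m+2).choose m : ℕ) : ℝ) * ‖iteratedDeriv m (Hc ξ) θ‖ * ‖Qc2 ξ‖
          ≤ (((m+2).choose m : ℕ) : ℝ) * (c0 / (1+|θ|)^(m+2)) * 6 := by
        apply mul_le_mul _ hQ2 (norm_nonneg _) (by positivity)
        exact mul_le_mul le_rfl hB (norm_nonneg _) (by positivity)
      rw [hc_rec ξ (hne ξ hξ) m θ]
      rw [norm_mul, norm_neg, norm_inv]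
      have hS : ‖(((m+2).choose (m+1) : ℕ) : ℂ) * iteratedDeriv (m+1) (Hc ξ) θ * Qc1 ξ θ
          + (((m+2).choose m : ℕ) : ℂ) * iteratedDeriv m (Hc ξ) θ * Qc2 ξ‖
          ≤ (8*((m:ℝ)+2)*c1 + 6*(((m+2).choose m : ℕ):ℝ)*c0) / (1+|θ|)^(m+2) := by
        calc ‖(((m+2).choose (m+1) : ℕ) : ℂ) * iteratedDeriv (m+1) (Hc ξ) θ * Qc1 ξ θ
            + (((m+2).choose m : ℕ) : ℂ) * iteratedDeriv m (Hc ξ) θ * Qc2 ξ‖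
            ≤ ‖(((m+2).choose (m+1) : ℕ) : ℂ) * iteratedDeriv (m+1) (Hc ξ) θ * Qc1 ξ θ‖
              + ‖(((m+2).choose m : ℕ) : ℂ) * iteratedDeriv m (Hc ξ) θ * Qc2 ξ‖ :=
            norm_add_le _ _
        _ = (((m+2).choose (m+1) : ℕ) : ℝ) * ‖iteratedDeriv (m+1) (Hc ξ) θ‖ * ‖Qc1 ξ θ‖
              + (((m+2).choose m : ℕ) : ℝ) * ‖iteratedDeriv m (Hc ξ) θ‖ * ‖Qc2 ξ‖ := by
            rw [norm_mul, norm_mul, norm_mul, norm_mul, Complex.norm_natCast,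
              Complex.norm_natCast]
        _ ≤ ((m:ℝ)+2) * (c1 / ((1+|θ|)^(m+2)*(1+|θ|))) * (8*(1+|θ|))
              + (((m+2).choose m : ℕ) : ℝ) * (c0 / (1+|θ|)^(m+2)) * 6 :=
            add_le_add hT1 hT2
        _ = (8*((m:ℝ)+2)*c1 + 6*(((m+2).choose m : ℕ):ℝ)*c0) / (1+|θ|)^(m+2) := by
            field_simp
      calc ‖Qc ξ θ‖⁻¹ * ‖(((m+2).choose (m+1) : ℕ) : ℂ) * iteratedDeriv (m+1) (Hc ξ) θ * Qc1 ξ θ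
          + (((m+2).choose m : ℕ) : ℂ) * iteratedDeriv m (Hc ξ) θ * Qc2 ξ‖
          ≤ (cq*(1+|θ|)^2)⁻¹
            * ((8*((m:ℝ)+2)*c1 + 6*(((m+2).choose m : ℕ):ℝ)*c0) / (1+|θ|)^(m+2)) :=
          mul_le_mul (hQinv ξ hξ θ) hS (norm_nonneg _) (by positivity)
      _ = ((8*((m:ℝ)+2)*c1 + 6*(((m+2).choose m : ℕ):ℝ)*c0)/cq) / (1+|θ|)^(m+2+2) := by
          rw [pow_add]
          field_simp
          try ring
          try exact Or.inl trivial

lemma sq_le_imp {a b : ℝ} (ha : 0 ≤ a) (hb : 0 ≤ b) (h : a^2 ≤ b^2) : a ≤ b :=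
  (pow_le_pow_iff_left₀ ha hb two_ne_zero).mp h

lemma choose_le_two_pow' (n k : ℕ) (hk : k ∈ Finset.range (n+1)) :
    ((n.choose k : ℕ) : ℝ) ≤ 2^n := by
  have h : n.choose k ≤ 2^n := by
    rw [← Nat.sum_range_choose n]
    exact Finset.single_le_sum (fun i _ => Nat.zero_le _) hk
  calc ((n.choose k : ℕ) : ℝ) ≤ ((2^n : ℕ) : ℝ) := by exact_mod_cast h
  _ = 2^n := by push_cast; ring

lemma main_bound {ξb₀ ξb₁ : ℝ} (h₀ : 0 < ξb₀) (h₀₁ : ξb₀ ≤ ξb₁) (h₁ : ξb₁ < 1) :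
    ∀ n : ℕ, ∃ b : ℝ, 0 < b ∧ ∀ ξ₀ ∈ Set.Icc ξb₀ ξb₁, ∀ g : ℝ → ℂ, ContDiff ℝ ∞ g →
      (∀ θ : ℝ, (g θ)^2 = (Qc ξ₀ θ)⁻¹) → ∀ θ : ℝ, ∀ m ≤ n,
        ‖iteratedDeriv m g θ‖ ≤ b / (1+|θ|)^(m+1) := by
  obtain ⟨cq, hcq, hql⟩ := Qc_lower h₀ h₀₁ h₁
  have hcq' : cq ≠ 0 := ne_of_gt hcq
  have hne : ∀ ξ ∈ Set.Icc ξb₀ ξb₁, ∀ θ : ℝ, Qc ξ θ ≠ 0 := by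
    intro ξ hξ θ h
    have h5 := hql ξ hξ θ
    have h6 : (0:ℝ) < cq*(1+|θ|)^2 := by positivity
    rw [h, norm_zero] at h5; linarith
  -- pointwise bound on ‖g‖ and ‖g * Q‖
  have hgnorm : ∀ ξ ∈ Set.Icc ξb₀ ξb₁, ∀ g : ℝ → ℂ, (∀ θ : ℝ, (g θ)^2 = (Qc ξ θ)⁻¹) →
      ∀ θ : ℝ, ‖g θ‖^2 = ‖Qc ξ θ‖⁻¹ := by
    intro ξ hξ g hg θ
    have := congrArg norm (hg θ)
    rwa [norm_pow, norm_inv] at this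
  have hg0 : ∀ ξ ∈ Set.Icc ξb₀ ξb₁, ∀ g : ℝ → ℂ, (∀ θ : ℝ, (g θ)^2 = (Qc ξ θ)⁻¹) →
      ∀ θ : ℝ, ‖g θ‖ ≤ (Real.sqrt cq)⁻¹ / (1+|θ|) := by
    intro ξ hξ g hg θ
    have h1t : (0:ℝ) < 1+|θ| := by positivity
    have hsq : (0:ℝ) < Real.sqrt cq := Real.sqrt_pos.mpr hcq
    apply sq_le_imp (norm_nonneg _) (by positivity)
    have he : ((Real.sqrt cq)⁻¹ / (1+|θ|))^2 = (cq * (1+|θ|)^2)⁻¹ := by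
      rw [div_pow, inv_pow, Real.sq_sqrt (le_of_lt hcq), div_eq_mul_inv, ← mul_inv]
    rw [hgnorm ξ hξ g hg θ, he]
    exact inv_anti₀ (by positivity) (hql ξ hξ θ)
  have hgq : ∀ ξ ∈ Set.Icc ξb₀ ξb₁, ∀ g : ℝ → ℂ, (∀ θ : ℝ, (g θ)^2 = (Qc ξ θ)⁻¹) →
      ∀ θ : ℝ, ‖g θ * Qc ξ θ‖ ≤ 3*(1+|θ|) := by
    intro ξ hξ g hg θ
    have hξ0 : 0 ≤ ξ := le_trans (le_of_lt h₀) hξ.1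
    have hξ1 : ξ ≤ 1 := le_trans hξ.2 (le_of_lt h₁)
    have h1t : (0:ℝ) < 1+|θ| := by positivity
    apply sq_le_imp (norm_nonneg _) (by positivity)
    have hQpos : (0:ℝ) < ‖Qc ξ θ‖ := norm_pos_iff.mpr (hne ξ hξ θ)
    have he : ‖g θ * Qc ξ θ‖^2 = ‖Qc ξ θ‖ := by
      rw [norm_mul, mul_pow, hgnorm ξ hξ g hg θ, sq, ← mul_assoc,
        inv_mul_cancel₀ (ne_of_gt hQpos), one_mul]
    rw [he]
    calc ‖Qc ξ θ‖ ≤ 6*(1+|θ|)^2 := norm_Qc_le ξ θ hξ0 hξ1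
    _ ≤ (3*(1+|θ|))^2 := by nlinarith [abs_nonneg θ]
  intro n
  induction n with
  | zero =>
    refine ⟨(Real.sqrt cq)⁻¹, by positivity, ?_⟩
    intro ξ₀ hξ g hgsm hg θ m hm
    have hm0 : m = 0 := Nat.le_zero.mp hm
    subst hm0
    rw [iteratedDeriv_zero]
    simpa using hg0 ξ₀ hξ g hg θ
  | succ n IHn =>
    obtain ⟨b, hb, hP⟩ := IHn
    obtain ⟨cH, hcH, hHb⟩ := Hc_bound h₀ h₀₁ h₁ (n+1)
    set D : ℝ := (n:ℝ) * 2^(n+1) * b^2 with hD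
    have hDnn : 0 ≤ D := by positivity
    refine ⟨b + (3/2)*(cH + D), by positivity, ?_⟩
    intro ξ₀ hξ g hgsm hg θ m hm
    have h1t : (0:ℝ) < 1+|θ| := by positivity
    rcases Nat.lt_succ_iff_lt_or_eq.mp (Nat.lt_succ_of_le hm) with hlt | heq
    · -- m ≤ n : use IH
      have := hP ξ₀ hξ g hgsm hg θ m (by omega)
      calc ‖iteratedDeriv m g θ‖ ≤ b / (1+|θ|)^(m+1) := this
      _ ≤ (b + (3/2)*(cH + D)) / (1+|θ|)^(m+1) := by
          gcongr
          nlinarith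
    · -- m = n+1
      subst heq
      have hg2 : (fun y => g y * g y) = Hc ξ₀ := by
        funext y
        rw [← pow_two, hg y]
        rfl
      have L := myLeibniz (n+1) g g hgsm hgsm θ
      rw [hg2] at L
      rw [Finset.sum_range_succ] at L
      rw [Finset.sum_range_succ'] at L
      simp only [Nat.sub_self, Nat.choose_self, Nat.choose_zero_right, Nat.cast_one, one_mul,
        Nat.sub_zero, iteratedDeriv_zero] at L
      set G : ℂ := iteratedDeriv (n+1) g θ with hG
      set M : ℂ := ∑ i ∈ Finset.range n, ((n+1).choose (i+1) : ℂ)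
          * iteratedDeriv (i+1) g θ * iteratedDeriv (n-i) g θ with hM
      have hsum_eq : ∑ i ∈ Finset.range n, ((n+1).choose (i+1) : ℂ)
          * iteratedDeriv (i+1) g θ * iteratedDeriv (n+1-(i+1)) g θ = M := by
        rw [hM]
        refine Finset.sum_congr rfl (fun i hi => ?_)
        have : n+1-(i+1) = n-i := by omega
        rw [this]
      rw [hsum_eq] at L
      have hid : iteratedDeriv (n+1) (Hc ξ₀) θ = M + 2*(g θ * G) := by
        rw [L]; ring
      have hQ1 : (g θ)^2 * Qc ξ₀ θ = 1 := by
        rw [hg θ]; exact inv_mul_cancel₀ (hne ξ₀ hξ θ)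
      have hGid : G = (g θ * Qc ξ₀ θ/2) * (iteratedDeriv (n+1) (Hc ξ₀) θ - M) := by
        rw [hid]
        have : (g θ * Qc ξ₀ θ/2) * (M + 2*(g θ * G) - M) = ((g θ)^2 * Qc ξ₀ θ) * G := by
          ring
        rw [this, hQ1, one_mul]
      -- norm bounds
      have hMb : ‖M‖ ≤ D / (1+|θ|)^(n+3) := by
        rw [hM]
        calc ‖∑ i ∈ Finset.range n, ((n+1).choose (i+1) : ℂ)
              * iteratedDeriv (i+1) g θ * iteratedDeriv (n-i) g θ‖
            ≤ ∑ i ∈ Finset.range n, ‖((n+1).choose (i+1) : ℂ)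
              * iteratedDeriv (i+1) g θ * iteratedDeriv (n-i) g θ‖ := norm_sum_le _ _
        _ ≤ ∑ i ∈ Finset.range n, 2^(n+1) * b^2 / (1+|θ|)^(n+3) := by
            apply Finset.sum_le_sum
            intro i hi
            have hi' : i < n := Finset.mem_range.mp hi
            rw [norm_mul, norm_mul, Complex.norm_natCast]
            have hA := hP ξ₀ hξ g hgsm hg θ (i+1) (by omega)
            have hB := hP ξ₀ hξ g hgsm hg θ (n-i) (by omega)
            have hCb : (((n+1).choose (i+1) : ℕ) : ℝ) ≤ 2^(n+1) :=
              choose_le_two_pow' (n+1) (i+1) (Finset.mem_range.mpr (by omega))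
            calc (((n+1).choose (i+1) : ℕ) : ℝ) * ‖iteratedDeriv (i+1) g θ‖
                  * ‖iteratedDeriv (n-i) g θ‖
                ≤ 2^(n+1) * (b/(1+|θ|)^(i+1+1)) * (b/(1+|θ|)^(n-i+1)) := by
                  apply mul_le_mul _ hB (norm_nonneg _) (by positivity)
                  exact mul_le_mul hCb hA (norm_nonneg _) (by positivity)
            _ = 2^(n+1) * b^2 / (1+|θ|)^(n+3) := by
                  rw [mul_assoc, div_mul_div_comm, ← pow_add,
                    show i+1+1+(n-i+1) = n+3 by omega]
                  ring
        _ = (n:ℝ) * (2^(n+1) * b^2 / (1+|θ|)^(n+3)) := by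
            rw [Finset.sum_const, Finset.card_range, nsmul_eq_mul]
        _ = D / (1+|θ|)^(n+3) := by rw [hD]; ring
      have hHder : ‖iteratedDeriv (n+1) (Hc ξ₀) θ‖ ≤ cH / (1+|θ|)^(n+3) := by
        have := hHb ξ₀ hξ θ
        rwa [show n+1+2 = n+3 by omega] at this
      have hgqb := hgq ξ₀ hξ g hg θ
      calc ‖G‖ = ‖g θ * Qc ξ₀ θ/2‖ * ‖iteratedDeriv (n+1) (Hc ξ₀) θ - M‖ := by
            rw [hGid, norm_mul]
      _ ≤ (3*(1+|θ|)/2) * ((cH + D) / (1+|θ|)^(n+3)) := by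
            apply mul_le_mul _ _ (norm_nonneg _) (by positivity)
            · rw [norm_div]
              simp only [Complex.norm_ofNat]
              linarith [hgqb]
            · calc ‖iteratedDeriv (n+1) (Hc ξ₀) θ - M‖
                  ≤ ‖iteratedDeriv (n+1) (Hc ξ₀) θ‖ + ‖M‖ := norm_sub_le _ _
              _ ≤ cH / (1+|θ|)^(n+3) + D / (1+|θ|)^(n+3) := add_le_add hHder hMb
              _ = (cH + D) / (1+|θ|)^(n+3) := by rw [← add_div]
      _ ≤ (b + (3/2)*(cH + D)) / (1+|θ|)^(n+1+1) := by
            rw [show n+3 = (n+1+1)+1 by omega, pow_succ]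
            have h1t' : (1:ℝ)+|θ| ≠ 0 := ne_of_gt h1t
            have hpw' : ((1:ℝ)+|θ|)^(n+1+1) ≠ 0 := by positivity
            have heq : (3*(1+|θ|)/2) * ((cH+D)/((1+|θ|)^(n+1+1)*(1+|θ|)))
                = ((3/2)*(cH+D))/(1+|θ|)^(n+1+1) := by
              field_simp
            rw [heq]
            gcongr
            linarith

lemma one_add_pow_le (x : ℝ) (hx : 0 ≤ x) : ∀ n : ℕ, 1 + x^(n+1) ≤ (1+x)^(n+1) := by
  intro n
  induction n with
  | zero => simp
  | succ n ih =>
    have hp : 0 ≤ x^(n+1) := by positivity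
    calc 1 + x^(n+1+1) ≤ (1 + x^(n+1))*(1+x) := by
          rw [pow_succ]
          nlinarith
    _ ≤ (1+x)^(n+1)*(1+x) := by nlinarith [pow_nonneg (by linarith : (0:ℝ) ≤ 1+x) (n+1)]
    _ = (1+x)^(n+1+1) := by rw [← pow_succ]

/-- bounds on derivatives of a smooth branch of `(q(ξ₀+θ))^{-1/2}`,
uniform in `ξ₀ ∈ [ξ̄₀, ξ̄₁] ⊂ (0,1)` and `θ ∈ ℝ`. -/
theorem inv_sqrt_q_deriv_bound (ξb₀ ξb₁ : ℝ) (h₀ : 0 < ξb₀) (h₀₁ : ξb₀ ≤ ξb₁) (h₁ : ξb₁ < 1) :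
    ∀ n : ℕ, ∃ b : ℝ, 0 < b ∧
      ∀ ξ₀ : ℝ, ξ₀ ∈ Set.Icc ξb₀ ξb₁ →
        ∀ g : ℝ → ℂ, ContDiff ℝ (⊤ : ℕ∞) g →
          (∀ θ : ℝ, (g θ) ^ 2 =
            ((1 : ℂ) + 2 * I * (ξ₀ + θ) - (1 + 2 * I * ξ₀) * (ξ₀ + θ : ℝ) ^ 2)⁻¹) →
          ∀ θ : ℝ, ‖iteratedDeriv n g θ‖ ≤ b / (1 + |θ| ^ (n + 1)) := by
  intro n
  obtain ⟨b, hb, hP⟩ := main_bound h₀ h₀₁ h₁ n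
  refine ⟨b, hb, ?_⟩
  intro ξ₀ hξ g hgsm hg θ
  have hg' : ∀ θ : ℝ, (g θ)^2 = (Qc ξ₀ θ)⁻¹ := by
    intro θ
    rw [hg θ]
    congr 1
    unfold Qc
    push_cast
    ring
  have h1 := hP ξ₀ hξ g (hgsm.of_le (by simp)) hg' θ n le_rfl
  have h1t : (0:ℝ) < 1+|θ| := by positivity
  have h2 : 1 + |θ|^(n+1) ≤ (1+|θ|)^(n+1) := one_add_pow_le |θ| (abs_nonneg θ) n
  have h3 : (0:ℝ) < 1 + |θ|^(n+1) := by positivity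
  calc ‖iteratedDeriv n g θ‖ ≤ b / (1+|θ|)^(n+1) := h1
  _ ≤ b / (1 + |θ|^(n+1)) := by gcongr
end

section
/- Let m₁₁(s) = (2i - (ξ₀+s)β)/(2q(s)) with β = 1+2iξ₀ and q(s) = 1+2is-βs². Then the imaginary part of m₁₁(s) equals η₀²/|q(s)|², where η₀² = 1 - ξ₀². In particular Im m₁₁(s) > 0 for all real s when 0 < ξ₀ < 1. -/
/-!
Writing `Im (N / q) = Im (N * conj q) / |q|²` for the numerator `N = 2i - (ξ₀ + s)β`, the
polynomial `Im (N * conj q)` turns out to be the constant `2(1 - ξ₀²)`: all powers of `s` cancel.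
Hence `Im m₁₁(s) = (1 - ξ₀²) / |q(s)|² = η₀² / |q(s)|²`, which is positive since `|ξ₀| < 1`.
-/

open Complex
open ComplexConjugate

theorem Complex.im_div_eq_im_mul_conj_div_normSq (z w : ℂ) :
    (z / w).im = (z * conj w).im / normSq w := by
  rw [div_im, mul_im, conj_re, conj_im]
  ring

theorem im_numerator_mul_conj_q (ξ s : ℝ) :
    ((2 * I - (ξ + s) * (1 + 2 * I * ξ)) * conj (1 + 2 * I * s - (1 + 2 * I * ξ) * s ^ 2)).im =
      2 * (1 - ξ ^ 2) := by
  simp only [mul_im, mul_re, sub_im, sub_re, add_im, add_re, conj_re, conj_im, I_re, I_im,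
    ofReal_re, ofReal_im, re_ofNat, im_ofNat, one_re, one_im, pow_two]
  ring

theorem im_m11_eq_div_normSq (ξ s : ℝ) :
    ((2 * I - (ξ + s) * (1 + 2 * I * ξ)) / (2 * (1 + 2 * I * s - (1 + 2 * I * ξ) * s ^ 2))).im =
      (1 - ξ ^ 2) / normSq (1 + 2 * I * s - (1 + 2 * I * ξ) * s ^ 2) := by
  rw [div_mul_eq_div_div_swap, div_ofNat_im, im_div_eq_im_mul_conj_div_normSq,
    im_numerator_mul_conj_q]
  ring

theorem im_m11_eq (ξ₀ η₀ : ℝ) (hξ : 0 < ξ₀ ∧ ξ₀ < 1) (hη : η₀ = Real.sqrt (1 - ξ₀ ^ 2))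
    (β : ℂ) (hβ : β = 1 + 2 * I * ξ₀)
    (q : ℝ → ℂ) (hq : ∀ s : ℝ, q s = 1 + 2 * I * s - β * s ^ 2)
    (hq0 : ∀ s : ℝ, q s ≠ 0)
    (m : ℝ → ℂ) (hm : ∀ s : ℝ, m s = (2 * I - (ξ₀ + s) * β) / (2 * q s)) :
    ∀ s : ℝ, (m s).im = η₀ ^ 2 / ‖q s‖ ^ 2 ∧ 0 < (m s).im := by
  intro s
  have hξ_sq : 0 < 1 - ξ₀ ^ 2 := by nlinarith [hξ.1, hξ.2]
  have hm_im : (m s).im = (1 - ξ₀ ^ 2) / normSq (q s) := by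
    rw [hm, hq, hβ, im_m11_eq_div_normSq]
  have hη_sq : η₀ ^ 2 = 1 - ξ₀ ^ 2 := by rw [hη, Real.sq_sqrt hξ_sq.le]
  rw [hm_im, hη_sq, Complex.sq_norm]
  exact ⟨rfl, div_pos hξ_sq (normSq_pos.mpr (hq0 s))⟩
end

section
/- There is a constant D₀ > 0, depending only on the bounds 0 < ξ̄₀ ≤ ξ₀ ≤ ξ̄₁ < 1, such that |m₁₁(ξ₀+θ)| ≥ D₀/(1+|θ|) for all real θ, where m₁₁(s) = (2i-(ξ₀+s)β)/(2q(s)), β = 1+2iξ₀, q(s) = 1+2is-βs². One may take D₀ = min(1/2, 1-ξ̄₁)/(√2 q₁) with q₁ the upper bound constant for |q|. -/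
open Complex ComplexConjugate

/-!
The numerator of `m₁₁(ξ₀ + θ)` is `A + θ B` with `A = 2i - 2ξ₀β` and `B = -β`. The real-linear
map `(s, t) ↦ s A + t B` has determinant `Im (conj A * B) = 2` and squared Frobenius norm
`‖A‖² + ‖B‖² = 5 - 8ξ₀² + 16ξ₀⁴`, so its smallest singular value is at least
`2 / √(5 - 8ξ₀² + 16ξ₀⁴)`, and the numerator has modulus at least `√2 c √(1 + θ²)` with
`c = min (1/2) (1 - ξ̄₁)`. Dividing by `2‖q‖ ≤ 2 q₁ (1 + θ²)` and using `√(1 + θ²) ≤ 1 + |θ|`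
gives the bound; `q` never vanishes because `ξ₀² ≠ 1`.
-/

theorem sq_im_conj_mul_mul_add_sq_le (A B : ℂ) (s t : ℝ) :
    (conj A * B).im ^ 2 * (s ^ 2 + t ^ 2) ≤ (‖A‖ ^ 2 + ‖B‖ ^ 2) * ‖s * A + t * B‖ ^ 2 := by
  simp only [Complex.sq_norm, normSq_apply, mul_im, mul_re, add_re, add_im, conj_re, conj_im,
    ofReal_re, ofReal_im]
  nlinarith [sq_nonneg ((s * A.re + t * B.re) * A.im - (s * A.im + t * B.im) * A.re),
    sq_nonneg ((s * A.re + t * B.re) * B.im - (s * A.im + t * B.im) * B.re),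
    sq_nonneg ((s * A.re + t * B.re) * A.re + (s * A.im + t * B.im) * A.im),
    sq_nonneg ((s * A.re + t * B.re) * B.re + (s * A.im + t * B.im) * B.im)]

theorem sq_mul_quartic_le_two {x c : ℝ} (hx : 0 ≤ x) (hc : 0 ≤ c) (hc₁ : c ≤ 1 / 2)
    (hcx : c ≤ 1 - x) : c ^ 2 * (5 - 8 * x ^ 2 + 16 * x ^ 4) ≤ 2 := by
  rcases le_or_gt (4 * x ^ 2) 3 with hx3 | hx3
  · have hc_sq : c ^ 2 ≤ 1 / 4 := by nlinarith
    nlinarith [sq_nonneg (4 * x ^ 2 - 1)]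
  · have hx1 : 4 / 5 < x := by nlinarith
    have hc_sq : c ^ 2 ≤ 1 / 25 := by nlinarith
    have hx2 : x ^ 2 ≤ 1 := by nlinarith
    have hquartic : 5 - 8 * x ^ 2 + 16 * x ^ 4 ≤ 13 := by nlinarith
    nlinarith

theorem one_add_two_I_mul_sub_mul_sq_ne_zero {x : ℝ} (hx : x ^ 2 ≠ 1) (s : ℝ) :
    1 + 2 * I * s - (1 + 2 * I * x) * s ^ 2 ≠ 0 := by
  intro h
  have hre : 1 - s * s = 0 := by simpa [pow_two] using congrArg re h
  have him : 2 * s - 2 * x * (s * s) = 0 := by simpa [pow_two] using congrArg im h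
  have hs : s = x := by linear_combination him / 2 - x * hre
  subst hs
  exact hx (by linear_combination -hre)

theorem two_mul_sq_mul_le_norm_sq_numerator {x c : ℝ} (hx : 0 ≤ x) (hc : 0 ≤ c) (hc₁ : c ≤ 1 / 2)
    (hcx : c ≤ 1 - x) (θ : ℝ) :
    2 * c ^ 2 * (1 + θ ^ 2) ≤ ‖2 * I - (x + ((x + θ : ℝ) : ℂ)) * (1 + 2 * I * x)‖ ^ 2 := by
  set A : ℂ := 2 * I - 2 * x * (1 + 2 * I * x)
  set B : ℂ := -(1 + 2 * I * x)
  have hAB : ((1 : ℝ) : ℂ) * A + θ * B = 2 * I - (x + ((x + θ : ℝ) : ℂ)) * (1 + 2 * I * x) := by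
    push_cast; ring
  have hdet : (conj A * B).im = 2 := by simp [A, B]
  have hfrob : ‖A‖ ^ 2 + ‖B‖ ^ 2 = 5 - 8 * x ^ 2 + 16 * x ^ 4 := by
    simp [A, B, Complex.sq_norm, normSq_apply]; ring
  have key := sq_im_conj_mul_mul_add_sq_le A B 1 θ
  rw [hAB, hdet, hfrob] at key
  have hS : 0 < 5 - 8 * x ^ 2 + 16 * x ^ 4 := by nlinarith [sq_nonneg (4 * x ^ 2 - 1)]
  have hc_quartic := sq_mul_quartic_le_two hx hc hc₁ hcx
  refine le_of_mul_le_mul_left ?_ hS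
  nlinarith [sq_nonneg θ]

theorem div_one_add_abs_le_div {c q₁ n Q θ : ℝ} (hc : 0 ≤ c) (hn : 0 ≤ n) (hQ : 0 < Q)
    (hnum : 2 * c ^ 2 * (1 + θ ^ 2) ≤ n ^ 2) (hden : Q ≤ q₁ * (1 + θ ^ 2)) :
    c / (√2 * q₁) / (1 + |θ|) ≤ n / (2 * Q) := by
  have hq₁ : 0 < q₁ := pos_of_mul_pos_left (hQ.trans_le hden) (by positivity)
  have hsqrt : √2 ^ 2 = 2 := Real.sq_sqrt zero_le_two
  have hθ : 1 + θ ^ 2 ≤ (1 + |θ|) ^ 2 := by nlinarith [sq_abs θ, abs_nonneg θ]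
  have hmain : √2 * c * (1 + θ ^ 2) ≤ n * (1 + |θ|) := by
    refine le_of_sq_le_sq ?_ (by positivity)
    calc (√2 * c * (1 + θ ^ 2)) ^ 2 = 2 * c ^ 2 * (1 + θ ^ 2) * (1 + θ ^ 2) := by
          rw [mul_pow, mul_pow, hsqrt]; ring
      _ ≤ n ^ 2 * (1 + |θ|) ^ 2 := mul_le_mul hnum hθ (by positivity) (by positivity)
      _ = (n * (1 + |θ|)) ^ 2 := by ring
  rw [div_div, div_le_div_iff₀ (by positivity) (by positivity)]
  calc c * (2 * Q) ≤ c * (2 * (q₁ * (1 + θ ^ 2))) := by gcongr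
    _ = √2 * q₁ * (√2 * c * (1 + θ ^ 2)) := by
        linear_combination (-(c * q₁) * (1 + θ ^ 2)) * hsqrt
    _ ≤ √2 * q₁ * (n * (1 + |θ|)) := by gcongr
    _ = n * (√2 * q₁ * (1 + |θ|)) := by ring

theorem m11_lower_bound_general (ξb₀ ξb₁ : ℝ) (h₀ : 0 < ξb₀) (h₁ : ξb₁ < 1)
    (ξ₀ : ℝ) (hξ : ξ₀ ∈ Set.Icc ξb₀ ξb₁)
    (β : ℂ) (hβ : β = 1 + 2 * I * ξ₀)
    (q : ℝ → ℂ) (hq : ∀ s : ℝ, q s = 1 + 2 * I * s - β * s ^ 2)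
    (m : ℝ → ℂ) (hm : ∀ s : ℝ, m s = (2 * I - (ξ₀ + s) * β) / (2 * q s))
    (q₁ : ℝ) (hq₁pos : 0 < q₁) (hq₁ : ∀ θ : ℝ, ‖q (ξ₀ + θ)‖ ≤ q₁ * (1 + θ ^ 2)) :
    ∃ D₀ : ℝ, 0 < D₀ ∧ D₀ = min (1 / 2) (1 - ξb₁) / (Real.sqrt 2 * q₁) ∧
      ∀ θ : ℝ, D₀ / (1 + |θ|) ≤ ‖m (ξ₀ + θ)‖ := by
  obtain ⟨hξb₀, hξb₁⟩ := hξ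
  set c := min (1 / 2) (1 - ξb₁)
  have hc : 0 < c := lt_min one_half_pos (by linarith)
  have hcξ : c ≤ 1 - ξ₀ := (min_le_right _ _).trans (by linarith)
  refine ⟨_, by positivity, rfl, fun θ => ?_⟩
  have hq_pos : 0 < ‖q (ξ₀ + θ)‖ := by
    rw [norm_pos_iff, hq, hβ]
    exact one_add_two_I_mul_sub_mul_sq_ne_zero (by nlinarith) _
  rw [hm, norm_div, norm_mul, Complex.norm_two, hβ]
  exact div_one_add_abs_le_div hc.le (norm_nonneg _) hq_pos
    (two_mul_sq_mul_le_norm_sq_numerator (by linarith) hc.le (min_le_left _ _) hcξ θ) (hq₁ θ)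

theorem m11_lower_bound (ξb₀ ξb₁ : ℝ) (h₀ : 0 < ξb₀) (h₀₁ : ξb₀ ≤ ξb₁) (h₁ : ξb₁ < 1)
    (ξ₀ : ℝ) (hξ : ξ₀ ∈ Set.Icc ξb₀ ξb₁)
    (β : ℂ) (hβ : β = 1 + 2 * I * ξ₀)
    (q : ℝ → ℂ) (hq : ∀ s : ℝ, q s = 1 + 2 * I * s - β * s ^ 2)
    (m : ℝ → ℂ) (hm : ∀ s : ℝ, m s = (2 * I - (ξ₀ + s) * β) / (2 * q s))
    (q₁ : ℝ) (hq₁pos : 0 < q₁) (hq₁ : ∀ θ : ℝ, ‖q (ξ₀ + θ)‖ ≤ q₁ * (1 + θ ^ 2)) :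
    ∃ D₀ : ℝ, 0 < D₀ ∧ D₀ = min (1 / 2) (1 - ξb₁) / (Real.sqrt 2 * q₁) ∧
      ∀ θ : ℝ, D₀ / (1 + |θ|) ≤ ‖m (ξ₀ + θ)‖ :=
  m11_lower_bound_general ξb₀ ξb₁ h₀ h₁ ξ₀ hξ β hβ q hq m hm q₁ hq₁pos hq₁
end

section
/- Let φ_a(δ,θ,η) = -θ³/3 + θ(δ - 2η₀η) with |δ| ≤ 1 and 0 < η₀ < 1. If c₀ ≥ √(32/15) and |θ| ≥ c₀(1+|η|^{1/2}), then |∂_θ φ_a(δ,θ,η)| = |θ² + 2η₀η - δ| ≥ (1 - 2/c₀²)θ². -/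
/-!
Squaring `c₀ (1 + √|η|) ≤ |θ|` gives `c₀² (1 + |η|) ≤ θ²`, so the perturbation `2η₀η - δ`,
of size at most `2 (1 + |η|)`, is at most a fraction `2 / c₀²` of `θ²`.
-/

lemma sq_mul_one_add_le_sq_of_mul_one_add_sqrt_le {c a θ : ℝ} (hc : 0 ≤ c) (ha : 0 ≤ a)
    (h : c * (1 + Real.sqrt a) ≤ |θ|) : c ^ 2 * (1 + a) ≤ θ ^ 2 := by
  have hsqrt : 1 + a ≤ (1 + Real.sqrt a) ^ 2 := by
    nlinarith [Real.sq_sqrt ha, Real.sqrt_nonneg a]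
  calc c ^ 2 * (1 + a) ≤ c ^ 2 * (1 + Real.sqrt a) ^ 2 := by gcongr
    _ = (c * (1 + Real.sqrt a)) ^ 2 := by ring
    _ ≤ |θ| ^ 2 := by gcongr
    _ = θ ^ 2 := sq_abs θ

lemma sub_two_mul_one_add_abs_le {a δ η : ℝ} (ha : |a| ≤ 1) (hδ : δ ≤ 1) (x : ℝ) :
    x - 2 * (1 + |η|) ≤ x + 2 * a * η - δ := by
  have : |a * η| ≤ |η| := by
    rw [abs_mul]
    exact mul_le_of_le_one_left (abs_nonneg η) ha
  linarith [neg_abs_le (a * η)]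

lemma one_sub_two_div_sq_mul_le {c s θ : ℝ} (hc : 0 < c) (h : c ^ 2 * s ≤ θ ^ 2) :
    (1 - 2 / c ^ 2) * θ ^ 2 ≤ θ ^ 2 - 2 * s := by
  have : 2 * s ≤ 2 / c ^ 2 * θ ^ 2 := by
    rw [div_mul_eq_mul_div, le_div_iff₀ (by positivity)]
    linarith
  linarith

theorem airy_phase_gradient_lower_bound (η₀ δ η : ℝ)
    (hη₀ : 0 < η₀ ∧ η₀ < 1) (hδ : |δ| ≤ 1)
    (c₀ : ℝ) (hc₀ : Real.sqrt (32 / 15) ≤ c₀) :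
    ∀ θ : ℝ, c₀ * (1 + Real.sqrt |η|) ≤ |θ| →
      (1 - 2 / c₀ ^ 2) * θ ^ 2 ≤ |θ ^ 2 + 2 * η₀ * η - δ| := by
  intro θ hθ
  have hc : 0 < c₀ := (Real.sqrt_pos.mpr (by norm_num)).trans_le hc₀
  have hη₀' : |η₀| ≤ 1 := abs_le.mpr ⟨by linarith [hη₀.1], hη₀.2.le⟩
  calc (1 - 2 / c₀ ^ 2) * θ ^ 2
      ≤ θ ^ 2 - 2 * (1 + |η|) := one_sub_two_div_sq_mul_le hc
        (sq_mul_one_add_le_sq_of_mul_one_add_sqrt_le hc.le (abs_nonneg η) hθ)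
    _ ≤ θ ^ 2 + 2 * η₀ * η - δ := sub_two_mul_one_add_abs_le hη₀' (le_of_abs_le hδ) _
    _ ≤ |θ ^ 2 + 2 * η₀ * η - δ| := le_abs_self _
end

section
/- With the recursion p₀=1, q₀=0, p_{m+1}=p_m'+xq_m, q_{m+1}=p_m+q_m', the degree of p_m + q_m equals ⌊m/2⌋ for all m ≥ 1, and for |x| < 1 one has |p_m(x)| + |q_m(x)| ≤ (d_{m+1}!)²/(1-|x|), where d_m = ⌊m/2⌋. -/
/-!
All coefficients of `p m` and `q m` are nonnegative. Giving `X` weight `2` and the `q`-component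
weight `1`, each step of the recursion raises the weight by at most one, so both `p m` and `q m`
have degree at most `m / 2`; the coefficient of `X ^ (m / 2)` is `1` in `p m` for even `m` and in
`q m` for odd `m`, which pins down the degree of the sum.

For the bound, nonnegative coefficients give `|f(x)| ≤ f(1)` on `|x| ≤ 1` and
`f'(1) ≤ deg f · f(1)`, so `S m = p m (1) + q m (1)` satisfies `S (m + 1) ≤ (m / 2 + 1) S m`,
whence `S m ≤ (m / 2)! ((m + 1) / 2)!`.
-/

open Polynomial

namespace Polynomial

variable {R : Type*}

theorem eval_one_derivative_le [CommSemiring R] [PartialOrder R] [IsOrderedRing R] {p : R[X]}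
    (hp : ∀ n, 0 ≤ p.coeff n) {d : ℕ} (hd : p.natDegree ≤ d) :
    p.derivative.eval 1 ≤ d * p.eval 1 := by
  rw [derivative_eval, eval_eq_sum, sum_def, sum_def, Finset.mul_sum]
  refine Finset.sum_le_sum fun n hn => ?_
  have hnd : (n : R) ≤ d := Nat.mono_cast ((le_natDegree_of_mem_supp n hn).trans hd)
  simpa only [one_pow, mul_one, mul_comm (d : R)] using mul_le_mul_of_nonneg_left hnd (hp n)

theorem abs_eval_le_eval_one [CommRing R] [LinearOrder R] [IsStrictOrderedRing R] {p : R[X]}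
    (hp : ∀ n, 0 ≤ p.coeff n) {x : R} (hx : |x| ≤ 1) :
    |p.eval x| ≤ p.eval 1 := by
  rw [eval_eq_sum, eval_eq_sum, sum_def, sum_def]
  refine (Finset.abs_sum_le_sum_abs _ _).trans (Finset.sum_le_sum fun n _ => ?_)
  rw [abs_mul, abs_of_nonneg (hp n), abs_pow, one_pow, mul_one]
  exact mul_le_of_le_one_right (hp n) (pow_le_one₀ (abs_nonneg x) hx)

end Polynomial

namespace AiryPolynomials

variable {p q : ℕ → ℝ[X]}

theorem coeff_p_succ_zero (hp : ∀ m : ℕ, p (m + 1) = (p m).derivative + X * q m)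
    (m : ℕ) : (p (m + 1)).coeff 0 = (p m).coeff 1 := by
  rw [hp, coeff_add, coeff_derivative, coeff_X_mul_zero]
  simp

theorem coeff_p_succ_succ (hp : ∀ m : ℕ, p (m + 1) = (p m).derivative + X * q m)
    (m i : ℕ) : (p (m + 1)).coeff (i + 1) = (p m).coeff (i + 2) * (i + 2) + (q m).coeff i := by
  rw [hp, coeff_add, coeff_derivative, coeff_X_mul]
  push_cast
  ring

theorem coeff_q_succ (hq : ∀ m : ℕ, q (m + 1) = p m + (q m).derivative) (m i : ℕ) :
    (q (m + 1)).coeff i = (p m).coeff i + (q m).coeff (i + 1) * (i + 1) := by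
  rw [hq, coeff_add, coeff_derivative]

theorem coeff_nonneg (hp0 : p 0 = 1) (hq0 : q 0 = 0)
    (hp : ∀ m : ℕ, p (m + 1) = (p m).derivative + X * q m)
    (hq : ∀ m : ℕ, q (m + 1) = p m + (q m).derivative) (m i : ℕ) :
    0 ≤ (p m).coeff i ∧ 0 ≤ (q m).coeff i := by
  induction m generalizing i with
  | zero =>
    rw [hp0, hq0, coeff_one, coeff_zero]
    exact ⟨by split_ifs <;> norm_num, le_rfl⟩
  | succ m ih =>
    refine ⟨?_, ?_⟩
    · rcases i with _ | i
      · simpa only [coeff_p_succ_zero hp] using (ih 1).1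
      · rw [coeff_p_succ_succ hp]
        have := (ih (i + 2)).1
        have := (ih i).2
        positivity
    · rw [coeff_q_succ hq]
      have := (ih i).1
      have := (ih (i + 1)).2
      positivity

theorem coeff_eq_zero (hp0 : p 0 = 1) (hq0 : q 0 = 0)
    (hp : ∀ m : ℕ, p (m + 1) = (p m).derivative + X * q m)
    (hq : ∀ m : ℕ, q (m + 1) = p m + (q m).derivative) (m i : ℕ) :
    (m < 2 * i → (p m).coeff i = 0) ∧ (m ≤ 2 * i → (q m).coeff i = 0) := by
  induction m generalizing i with
  | zero =>
    refine ⟨fun hi => ?_, fun _ => by rw [hq0, coeff_zero]⟩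
    rw [hp0, coeff_one, if_neg (by omega)]
  | succ m ih =>
    refine ⟨fun hi => ?_, fun hi => ?_⟩
    · obtain ⟨i, rfl⟩ : ∃ j, i = j + 1 := ⟨i - 1, by omega⟩
      rw [coeff_p_succ_succ hp, (ih (i + 2)).1 (by omega), (ih i).2 (by omega)]
      ring
    · rw [coeff_q_succ hq, (ih i).1 (by omega), (ih (i + 1)).2 (by omega)]
      ring

theorem natDegree_p_le (hp0 : p 0 = 1) (hq0 : q 0 = 0)
    (hp : ∀ m : ℕ, p (m + 1) = (p m).derivative + X * q m)
    (hq : ∀ m : ℕ, q (m + 1) = p m + (q m).derivative) (m : ℕ) :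
    (p m).natDegree ≤ m / 2 :=
  natDegree_le_iff_coeff_eq_zero.2 fun i hi =>
    (coeff_eq_zero hp0 hq0 hp hq m i).1 (by omega)

theorem natDegree_q_le (hp0 : p 0 = 1) (hq0 : q 0 = 0)
    (hp : ∀ m : ℕ, p (m + 1) = (p m).derivative + X * q m)
    (hq : ∀ m : ℕ, q (m + 1) = p m + (q m).derivative) (m : ℕ) :
    (q m).natDegree ≤ m / 2 :=
  natDegree_le_iff_coeff_eq_zero.2 fun i hi =>
    (coeff_eq_zero hp0 hq0 hp hq m i).2 (by omega)

theorem coeff_p_even_and_q_odd (hp0 : p 0 = 1) (hq0 : q 0 = 0)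
    (hp : ∀ m : ℕ, p (m + 1) = (p m).derivative + X * q m)
    (hq : ∀ m : ℕ, q (m + 1) = p m + (q m).derivative) (k : ℕ) :
    (p (2 * k)).coeff k = 1 ∧ (q (2 * k + 1)).coeff k = 1 := by
  have q_of_p (k : ℕ) (h : (p (2 * k)).coeff k = 1) : (q (2 * k + 1)).coeff k = 1 := by
    rw [coeff_q_succ hq, h, (coeff_eq_zero hp0 hq0 hp hq _ _).2 (by omega)]
    ring
  induction k with
  | zero => exact ⟨by rw [hp0, coeff_one_zero], q_of_p 0 (by rw [hp0, coeff_one_zero])⟩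
  | succ k ih =>
    have hp_succ : (p (2 * (k + 1))).coeff (k + 1) = 1 := by
      rw [show 2 * (k + 1) = 2 * k + 1 + 1 by ring, coeff_p_succ_succ hp,
        (coeff_eq_zero hp0 hq0 hp hq _ _).1 (by omega), ih.2]
      ring
    exact ⟨hp_succ, q_of_p _ hp_succ⟩

theorem one_le_coeff_add (hp0 : p 0 = 1) (hq0 : q 0 = 0)
    (hp : ∀ m : ℕ, p (m + 1) = (p m).derivative + X * q m)
    (hq : ∀ m : ℕ, q (m + 1) = p m + (q m).derivative) (m : ℕ) :
    1 ≤ (p m + q m).coeff (m / 2) := by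
  rw [coeff_add]
  obtain ⟨k, rfl | rfl⟩ := Nat.even_or_odd' m
  · rw [show 2 * k / 2 = k by omega, (coeff_p_even_and_q_odd hp0 hq0 hp hq k).1]
    linarith [(coeff_nonneg hp0 hq0 hp hq (2 * k) k).2]
  · rw [show (2 * k + 1) / 2 = k by omega, (coeff_p_even_and_q_odd hp0 hq0 hp hq k).2]
    linarith [(coeff_nonneg hp0 hq0 hp hq (2 * k + 1) k).1]

theorem natDegree_add (hp0 : p 0 = 1) (hq0 : q 0 = 0)
    (hp : ∀ m : ℕ, p (m + 1) = (p m).derivative + X * q m)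
    (hq : ∀ m : ℕ, q (m + 1) = p m + (q m).derivative) (m : ℕ) :
    (p m + q m).natDegree = m / 2 := by
  exact le_antisymm (natDegree_add_le_of_degree_le (natDegree_p_le hp0 hq0 hp hq m)
    (natDegree_q_le hp0 hq0 hp hq m))
    (le_natDegree_of_ne_zero (zero_lt_one.trans_le (one_le_coeff_add hp0 hq0 hp hq m)).ne')

theorem eval_one_add_le (hp0 : p 0 = 1) (hq0 : q 0 = 0)
    (hp : ∀ m : ℕ, p (m + 1) = (p m).derivative + X * q m)
    (hq : ∀ m : ℕ, q (m + 1) = p m + (q m).derivative) (m : ℕ) :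
    (p m).eval 1 + (q m).eval 1 ≤ (m / 2).factorial * ((m + 1) / 2).factorial := by
  induction m with
  | zero => simp [hp0, hq0]
  | succ m ih =>
    have hp' := eval_one_derivative_le (fun n => (coeff_nonneg hp0 hq0 hp hq m n).1)
      (natDegree_p_le hp0 hq0 hp hq m)
    have hq' := eval_one_derivative_le (fun n => (coeff_nonneg hp0 hq0 hp hq m n).2)
      (natDegree_q_le hp0 hq0 hp hq m)
    have hhalf : (m + 1 + 1) / 2 = m / 2 + 1 := by omega
    rw [hp, hq, hhalf, Nat.factorial_succ]
    push_cast
    calc (derivative (p m) + X * q m).eval 1 + (p m + derivative (q m)).eval 1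
        ≤ ((m / 2 : ℕ) + 1) * ((p m).eval 1 + (q m).eval 1) := by
          simp only [eval_add, eval_mul, eval_X, one_mul]
          linarith
      _ ≤ ((m / 2 : ℕ) + 1) * ((m / 2).factorial * ((m + 1) / 2).factorial) := by
          gcongr
      _ = _ := by ring

end AiryPolynomials

open AiryPolynomials in
theorem airy_polynomials_degree_and_bound
    (p q : ℕ → Polynomial ℝ)
    (hp0 : p 0 = 1) (hq0 : q 0 = 0)
    (hp : ∀ m : ℕ, p (m + 1) = (p m).derivative + X * q m)
    (hq : ∀ m : ℕ, q (m + 1) = p m + (q m).derivative) :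
    (∀ m : ℕ, 1 ≤ m → (p m + q m).natDegree = m / 2) ∧
    (∀ m : ℕ, ∀ x : ℝ, |x| < 1 →
      |(p m).eval x| + |(q m).eval x| ≤
        ((Nat.factorial ((m + 1) / 2) : ℝ)) ^ 2 / (1 - |x|)) := by
  refine ⟨fun m _ => natDegree_add hp0 hq0 hp hq m, fun m x hx => ?_⟩
  have hfact : ((m / 2).factorial : ℝ) ≤ ((m + 1) / 2).factorial :=
    mod_cast Nat.factorial_le (by omega)
  calc |(p m).eval x| + |(q m).eval x| ≤ (p m).eval 1 + (q m).eval 1 :=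
        add_le_add (abs_eval_le_eval_one (fun n => (coeff_nonneg hp0 hq0 hp hq m n).1) hx.le)
          (abs_eval_le_eval_one (fun n => (coeff_nonneg hp0 hq0 hp hq m n).2) hx.le)
    _ ≤ (m / 2).factorial * ((m + 1) / 2).factorial := eval_one_add_le hp0 hq0 hp hq m
    _ ≤ ((m + 1) / 2).factorial ^ 2 := by rw [sq]; gcongr
    _ ≤ ((m + 1) / 2).factorial ^ 2 / (1 - |x|) :=
        le_div_self (by positivity) (by linarith) (by linarith [abs_nonneg x])
end
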